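/- For bounded linear operators A, B, X, Y on a complex Hilbert space, w(A*XB + B*YA) ≤ 2‖A‖‖B‖ · w(T), where T is the operator on H ⊕ H given by the 2×2 block matrix with zero diagonal entries, (1,2)-entry X, and (2,1)-entry Y. -/

import Mathlib

open scoped InnerProductSpace
open ContinuousLinearMap Metric

/-- The numerical radius of a bounded operator on a complex Hilbert space. -/
noncomputable def numRadius {H : Type*} [NormedAddCommGroup H] [InnerProductSpace ℂ H]
    (T : H →L[ℂ] H) : ℝ :=
  sSup {r : ℝ | ∃ x : H, ‖x‖ = 1 ∧ r = ‖(inner ℂ (T x) x : ℂ)‖}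

/-- The block operator `[[0, X], [Y, 0]]` acting on `H ⊕ H` (with the `ℓ²` Hilbert space
structure) by `(x, y) ↦ (X y, Y x)`. -/
noncomputable def blockOp {H : Type*} [NormedAddCommGroup H] [InnerProductSpace ℂ H]
    (X Y : H →L[ℂ] H) : WithLp 2 (H × H) →L[ℂ] WithLp 2 (H × H) :=
  ((WithLp.prodContinuousLinearEquiv 2 ℂ H H).symm.toContinuousLinearMap) ∘L
    ((X ∘L ContinuousLinearMap.snd ℂ H H).prod (Y ∘L ContinuousLinearMap.fst ℂ H H)) ∘L
    ((WithLp.prodContinuousLinearEquiv 2 ℂ H H).toContinuousLinearMap)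

/-- `A` is a `G₁` operator: `‖(z - A)⁻¹‖ = 1 / dist (z, σ(A))` for all `z ∉ σ(A)`. -/
def IsG1 {H : Type*} [NormedAddCommGroup H] [InnerProductSpace ℂ H] [CompleteSpace H]
    (A : H →L[ℂ] H) : Prop :=
  ∀ z : ℂ, z ∉ spectrum ℂ A →
    ‖Ring.inverse (algebraMap ℂ (H →L[ℂ] H) z - A)‖ = 1 / Metric.infDist z (spectrum ℂ A)

/-- The distance between two subsets of `ℂ`. -/
noncomputable def setDist (s t : Set ℂ) : ℝ :=
  sInf {d : ℝ | ∃ z ∈ s, ∃ w ∈ t, d = dist z w}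

/-- The Riesz–Dunford functional calculus `f(A)` for `f` analytic on the unit disk and
`σ(A) ⊂ 𝔻`, realized through the Taylor expansion of `f` at `0`. -/
noncomputable def dunford {H : Type*} [NormedAddCommGroup H] [InnerProductSpace ℂ H]
    [CompleteSpace H] (f : ℂ → ℂ) (A : H →L[ℂ] H) : H →L[ℂ] H :=
  ∑' n : ℕ, (iteratedDeriv n f 0 / n.factorial) • A ^ n

/-- The modulus `|C| = (C*C)^{1/2}` of a bounded operator. -/
noncomputable def opAbs {H : Type*} [NormedAddCommGroup H] [InnerProductSpace ℂ H]
    [CompleteSpace H] (C : H →L[ℂ] H) : H →L[ℂ] H :=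
  CFC.sqrt (ContinuousLinearMap.adjoint C * C)

/-! For a unit vector `x` and real `t ≠ 0`, the vector `v = (t • A x, t⁻¹ • B x)` of `H ⊕ H`
satisfies `⟪T v, v⟫ = ⟪(A* X B + B* Y A) x, x⟫` and `‖v‖² = t² ‖A x‖² + t⁻² ‖B x‖²`;
choosing `t² = ‖B‖ / ‖A‖` bounds the latter by `2 ‖A‖ ‖B‖`. -/

section

variable {H : Type*} [NormedAddCommGroup H] [InnerProductSpace ℂ H]

lemma numRadius_bddAbove (T : H →L[ℂ] H) :
    BddAbove {r : ℝ | ∃ x : H, ‖x‖ = 1 ∧ r = ‖⟪T x, x⟫_ℂ‖} := by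
  refine ⟨‖T‖, ?_⟩
  rintro _ ⟨x, hx, rfl⟩
  calc ‖⟪T x, x⟫_ℂ‖ ≤ ‖T x‖ * ‖x‖ := norm_inner_le_norm _ _
    _ ≤ ‖T‖ := by simpa [hx] using T.le_opNorm x

lemma numRadius_nonneg (T : H →L[ℂ] H) : 0 ≤ numRadius T :=
  Real.sSup_nonneg (by rintro _ ⟨x, -, rfl⟩; positivity)

lemma norm_inner_self_le_numRadius_mul_sq (T : H →L[ℂ] H) (v : H) :
    ‖⟪T v, v⟫_ℂ‖ ≤ numRadius T * ‖v‖ ^ 2 := by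
  rcases eq_or_ne v 0 with rfl | hv
  · simp
  have hv' : 0 < ‖v‖ := norm_pos_iff.2 hv
  set c : ℂ := ((‖v‖⁻¹ : ℝ) : ℂ)
  have hunit : ‖c • v‖ = 1 := by
    rw [norm_smul, Complex.norm_real, Real.norm_of_nonneg (by positivity), inv_mul_cancel₀ hv'.ne']
  have hle : ‖⟪T (c • v), c • v⟫_ℂ‖ ≤ numRadius T :=
    le_csSup (numRadius_bddAbove T) ⟨_, hunit, rfl⟩
  rw [map_smul, inner_smul_left, inner_smul_right, Complex.conj_ofReal, norm_mul, norm_mul,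
    Complex.norm_real, Real.norm_of_nonneg (by positivity)] at hle
  calc ‖⟪T v, v⟫_ℂ‖ = ‖v‖ ^ 2 * (‖v‖⁻¹ * (‖v‖⁻¹ * ‖⟪T v, v⟫_ℂ‖)) := by field_simp
    _ ≤ numRadius T * ‖v‖ ^ 2 := by rw [mul_comm]; gcongr

lemma numRadius_le_of_forall_norm_inner_le {T : H →L[ℂ] H} {c : ℝ} (hc : 0 ≤ c)
    (h : ∀ x : H, ‖x‖ = 1 → ‖⟪T x, x⟫_ℂ‖ ≤ c) : numRadius T ≤ c :=
  Real.sSup_le (by rintro _ ⟨x, hx, rfl⟩; exact h x hx) hc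

lemma inner_blockOp_toLp (X Y : H →L[ℂ] H) (u w : H) :
    ⟪blockOp X Y (WithLp.toLp 2 (u, w)), WithLp.toLp 2 (u, w)⟫_ℂ = ⟪X w, u⟫_ℂ + ⟪Y u, w⟫_ℂ :=
  rfl

variable [CompleteSpace H]

lemma inner_blockOp_toLp_smul_smul_inv (A B X Y : H →L[ℂ] H) (x : H) {t : ℝ} (ht : t ≠ 0) :
    ⟪blockOp X Y (WithLp.toLp 2 ((t : ℂ) • A x, (t : ℂ)⁻¹ • B x)),
        WithLp.toLp 2 ((t : ℂ) • A x, (t : ℂ)⁻¹ • B x)⟫_ℂ =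
      ⟪(adjoint A * X * B + adjoint B * Y * A) x, x⟫_ℂ := by
  have ht' : (t : ℂ) ≠ 0 := by exact_mod_cast ht
  rw [inner_blockOp_toLp, add_apply, inner_add_left, mul_apply_eq_comp, mul_apply_eq_comp,
    mul_apply_eq_comp, mul_apply_eq_comp, adjoint_inner_left, adjoint_inner_left]
  simp only [map_smul, inner_smul_left, inner_smul_right, Complex.conj_ofReal, map_inv₀]
  field_simp

lemma norm_inner_adjoint_sandwich_le (A B X Y : H →L[ℂ] H) (x : H) {t : ℝ} (ht : t ≠ 0) :
    ‖⟪(adjoint A * X * B + adjoint B * Y * A) x, x⟫_ℂ‖ ≤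
      numRadius (blockOp X Y) * (t ^ 2 * ‖A x‖ ^ 2 + t⁻¹ ^ 2 * ‖B x‖ ^ 2) := by
  rw [← inner_blockOp_toLp_smul_smul_inv A B X Y x ht]
  refine (norm_inner_self_le_numRadius_mul_sq _ _).trans_eq ?_
  rw [WithLp.prod_norm_sq_eq_of_L2]
  simp [norm_smul, mul_pow]

end

lemma exists_sq_mul_sq_add_inv_sq_mul_sq_eq {a b : ℝ} (ha : 0 < a) (hb : 0 < b) :
    ∃ t : ℝ, t ≠ 0 ∧ t ^ 2 * a ^ 2 + t⁻¹ ^ 2 * b ^ 2 = 2 * a * b := by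
  refine ⟨√(b / a), by positivity, ?_⟩
  rw [inv_pow, Real.sq_sqrt (by positivity)]
  field_simp
  ring

theorem stmt3 {H : Type*} [NormedAddCommGroup H] [InnerProductSpace ℂ H] [CompleteSpace H] (A B X Y : H →L[ℂ] H) :
    numRadius (ContinuousLinearMap.adjoint A * X * B + ContinuousLinearMap.adjoint B * Y * A) ≤
      2 * ‖A‖ * ‖B‖ * numRadius (blockOp X Y) := by
  have hw := numRadius_nonneg (blockOp X Y)
  refine numRadius_le_of_forall_norm_inner_le (by positivity) fun x hx => ?_
  rcases (norm_nonneg A).eq_or_lt' with hA | hA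
  · simp [norm_eq_zero.1 hA]
  rcases (norm_nonneg B).eq_or_lt' with hB | hB
  · simp [norm_eq_zero.1 hB]
  obtain ⟨t, ht, hsum⟩ := exists_sq_mul_sq_add_inv_sq_mul_sq_eq hA hB
  calc _ ≤ numRadius (blockOp X Y) * (t ^ 2 * ‖A x‖ ^ 2 + t⁻¹ ^ 2 * ‖B x‖ ^ 2) :=
        norm_inner_adjoint_sandwich_le A B X Y x ht
    _ ≤ numRadius (blockOp X Y) * (t ^ 2 * ‖A‖ ^ 2 + t⁻¹ ^ 2 * ‖B‖ ^ 2) := by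
        gcongr <;> exact unit_le_opNorm _ _ hx.le
    _ = 2 * ‖A‖ * ‖B‖ * numRadius (blockOp X Y) := by rw [hsum, mul_comm]
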